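/- Let a, b, c be positive real numbers and n ≥ 0 an integer. Then ∫_0^1 K_n(x|a,c) · f(x|a,b) dx = (a)^(n) · (c − b)^(n) / ( n! · (a + b)^(n) ). -/

import Mathlib

/-- The rising factorial (Pochhammer symbol) `(y)^(k) = y(y+1)⋯(y+k-1)`. -/
noncomputable def risingFactorial (x : ℝ) (n : ℕ) : ℝ :=
  ∏ i ∈ Finset.range n, (x + i)

/-- The shifted Jacobi polynomial
`K_n(x|a,b) = (1/n!) ∑_{m=0}^n C(n,m) (a+b+n-1)^(m) (b+m)^(n-m) (x-1)^m`. -/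
noncomputable def jacobiK (n : ℕ) (a b x : ℝ) : ℝ :=
  (1 / (n.factorial : ℝ)) * ∑ m ∈ Finset.range (n + 1),
    (n.choose m : ℝ) * risingFactorial (a + b + n - 1) m *
      risingFactorial (b + m) (n - m) * (x - 1) ^ m

/-- The Beta(a,b) probability density: `x^(a-1)(1-x)^(b-1)/B(a,b)` on `[0,1]`, `0` otherwise,
where `B(a,b) = Γ(a)Γ(b)/Γ(a+b)`. -/
noncomputable def betaDensity (a b x : ℝ) : ℝ :=
  if 0 ≤ x ∧ x ≤ 1 then
    x ^ (a - 1) * (1 - x) ^ (b - 1) / (Real.Gamma a * Real.Gamma b / Real.Gamma (a + b))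
  else 0

open MeasureTheory intervalIntegral

lemma rf_zero (x : ℝ) : risingFactorial x 0 = 1 := by simp [risingFactorial]

lemma rf_succ (x : ℝ) (k : ℕ) :
    risingFactorial x (k + 1) = risingFactorial x k * (x + k) := by
  simp [risingFactorial, Finset.prod_range_succ]

lemma rf_succ' (x : ℝ) (k : ℕ) :
    risingFactorial x (k + 1) = x * risingFactorial (x + 1) k := by
  rw [risingFactorial, Finset.prod_range_succ']
  simp only [Nat.cast_zero, add_zero, mul_comm]
  congr 1
  refine Finset.prod_congr rfl fun i _ => ?_
  push_cast; ring

lemma rf_add (x : ℝ) (m k : ℕ) :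
    risingFactorial x (m + k) = risingFactorial x m * risingFactorial (x + m) k := by
  rw [risingFactorial, Finset.prod_range_add]
  congr 1
  refine Finset.prod_congr rfl fun i _ => ?_
  push_cast; ring

lemma rf_pos {x : ℝ} (hx : 0 < x) (k : ℕ) : 0 < risingFactorial x k := by
  refine Finset.prod_pos fun i _ => ?_
  positivity

lemma rf_neg (x : ℝ) (k : ℕ) :
    risingFactorial (1 - x - k) k = (-1) ^ k * risingFactorial x k := by
  induction k generalizing x with
  | zero => simp [rf_zero]
  | succ k ih =>
    rw [rf_succ', rf_succ]
    have h1 : 1 - x - (k + 1 : ℕ) + 1 = 1 - x - k := by push_cast; ring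
    rw [h1, ih x]
    push_cast; ring
lemma pascal_sum (N : ℕ) (f : ℕ → ℝ) :
    ∑ m ∈ Finset.range (N + 2), ((N + 1).choose m : ℝ) * f m
      = ∑ m ∈ Finset.range (N + 1), (N.choose m : ℝ) * f m
        + ∑ m ∈ Finset.range (N + 1), (N.choose m : ℝ) * f (m + 1) := by
  rw [Finset.sum_range_succ']
  have h1 : ∀ m, ((N + 1).choose (m + 1) : ℝ) = (N.choose m : ℝ) + (N.choose (m + 1) : ℝ) := by
    intro m; rw [Nat.choose_succ_succ]; push_cast; ring
  simp only [h1, add_mul]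
  rw [Finset.sum_add_distrib]
  have h2 : ∑ m ∈ Finset.range (N + 1), (N.choose (m + 1) : ℝ) * f (m + 1)
      + ((N + 1).choose 0 : ℝ) * f 0 = ∑ m ∈ Finset.range (N + 1), (N.choose m : ℝ) * f m := by
    have h3 := Finset.sum_range_succ' (fun m => (N.choose m : ℝ) * f m) (N + 1)
    have h4 := Finset.sum_range_succ (fun m => (N.choose m : ℝ) * f m) (N + 1)
    simp only [Nat.choose_succ_self, Nat.cast_zero, zero_mul, add_zero] at h4
    simp only [Nat.choose_zero_right, Nat.cast_one] at *
    linarith [h3, h4]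
  linarith [h2]
lemma vand (n : ℕ) (x y : ℝ) :
    ∑ k ∈ Finset.range (n + 1), (n.choose k : ℝ) * risingFactorial x k * risingFactorial y (n - k)
      = risingFactorial (x + y) n := by
  induction n generalizing x y with
  | zero => simp [rf_zero]
  | succ n ih =>
    have hps := pascal_sum n (fun k => risingFactorial x k * risingFactorial y (n + 1 - k))
    simp only [← mul_assoc] at hps
    rw [hps]
    have e1 : ∑ k ∈ Finset.range (n + 1),
        (n.choose k : ℝ) * risingFactorial x k * risingFactorial y (n + 1 - k)
        = y * ∑ k ∈ Finset.range (n + 1),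
          (n.choose k : ℝ) * risingFactorial x k * risingFactorial (y + 1) (n - k) := by
      rw [Finset.mul_sum]
      refine Finset.sum_congr rfl fun k hk => ?_
      have hkn : k ≤ n := Nat.lt_succ_iff.mp (Finset.mem_range.mp hk)
      rw [show n + 1 - k = (n - k) + 1 by omega, rf_succ']
      ring
    have e2 : ∑ k ∈ Finset.range (n + 1),
        (n.choose k : ℝ) * risingFactorial x (k + 1) * risingFactorial y (n + 1 - (k + 1))
        = x * ∑ k ∈ Finset.range (n + 1),
          (n.choose k : ℝ) * risingFactorial (x + 1) k * risingFactorial y (n - k) := by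
      rw [Finset.mul_sum]
      refine Finset.sum_congr rfl fun k hk => ?_
      rw [show n + 1 - (k + 1) = n - k by omega, rf_succ']
      ring
    rw [e1, e2, ih x (y + 1), ih (x + 1) y, rf_succ']
    ring_nf

lemma altvand (N : ℕ) : ∀ A u : ℝ,
    ∑ m ∈ Finset.range (N + 1), (N.choose m : ℝ) * (-1) ^ m * risingFactorial A m *
        risingFactorial (u + m) (N - m)
      = risingFactorial (u - A) N := by
  induction N with
  | zero => simp [rf_zero]
  | succ N ih =>
    intro A u
    have hps := pascal_sum N
      (fun m => (-1) ^ m * risingFactorial A m * risingFactorial (u + m) (N + 1 - m))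
    have lhs_eq : ∑ m ∈ Finset.range (N + 2), ((N + 1).choose m : ℝ) * (-1) ^ m *
        risingFactorial A m * risingFactorial (u + m) (N + 1 - m)
        = ∑ m ∈ Finset.range (N + 2), ((N + 1).choose m : ℝ) *
          ((-1) ^ m * risingFactorial A m * risingFactorial (u + m) (N + 1 - m)) := by
      refine Finset.sum_congr rfl fun m _ => by ring
    rw [lhs_eq, hps]
    have e1 : ∑ m ∈ Finset.range (N + 1), (N.choose m : ℝ) *
        ((-1) ^ m * risingFactorial A m * risingFactorial (u + m) (N + 1 - m))
        = (u + N) * risingFactorial (u - A) N := by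
      rw [← ih A u, Finset.mul_sum]
      refine Finset.sum_congr rfl fun m hm => ?_
      have hmn : m ≤ N := Nat.lt_succ_iff.mp (Finset.mem_range.mp hm)
      rw [show N + 1 - m = (N - m) + 1 by omega, rf_succ]
      have : (u + m) + ((N - m : ℕ) : ℝ) = u + N := by
        rw [Nat.cast_sub hmn]; ring
      rw [this]; ring
    have e2 : ∑ m ∈ Finset.range (N + 1), (N.choose m : ℝ) *
        ((-1) ^ (m + 1) * risingFactorial A (m + 1) * risingFactorial (u + (m + 1 : ℕ)) (N + 1 - (m + 1)))
        = -A * risingFactorial (u - A) N := by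
      have := ih (A + 1) (u + 1)
      rw [show u + 1 - (A + 1) = u - A by ring] at this
      rw [← this, Finset.mul_sum]
      refine Finset.sum_congr rfl fun m hm => ?_
      rw [show N + 1 - (m + 1) = N - m by omega, rf_succ']
      have : u + ((m + 1 : ℕ) : ℝ) = (u + 1) + m := by push_cast; ring
      rw [this]; ring
    rw [e1, e2, rf_succ]
    ring
lemma triangle_swap (n : ℕ) (f : ℕ → ℕ → ℝ) :
    ∑ m ∈ Finset.range (n + 1), ∑ j ∈ Finset.range (n - m + 1), f m j
      = ∑ j ∈ Finset.range (n + 1), ∑ m ∈ Finset.range (n - j + 1), f m j := by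
  rw [Finset.sum_sigma', Finset.sum_sigma']
  refine Finset.sum_nbij' (fun x => ⟨x.2, x.1⟩) (fun x => ⟨x.2, x.1⟩) ?_ ?_
    (fun _ _ => rfl) (fun _ _ => rfl) (fun _ _ => rfl) <;>
  · simp only [Finset.mem_sigma, Finset.mem_range, Sigma.forall]
    intro a b; omega

lemma choose_swap {n m j : ℕ} (h : m + j ≤ n) :
    (n.choose m : ℝ) * (n - m).choose j = (n.choose j : ℝ) * (n - j).choose m := by
  have h1 : (n.choose m) * ((n - m).choose j) * (m.factorial * j.factorial * (n - m - j).factorial)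
      = n.factorial := by
    have e1 := Nat.choose_mul_factorial_mul_factorial (show m ≤ n by omega)
    have e2 := Nat.choose_mul_factorial_mul_factorial (show j ≤ n - m by omega)
    calc  (n.choose m) * ((n - m).choose j) * (m.factorial * j.factorial * (n - m - j).factorial)
        = (n.choose m) * m.factorial * ((n - m).choose j * j.factorial * (n - m - j).factorial) := by ring
      _ = n.factorial := by rw [e2]; exact e1
  have h2 : (n.choose j) * ((n - j).choose m) * (j.factorial * m.factorial * (n - j - m).factorial)
      = n.factorial := by
    have e1 := Nat.choose_mul_factorial_mul_factorial (show j ≤ n by omega)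
    have e2 := Nat.choose_mul_factorial_mul_factorial (show m ≤ n - j by omega)
    calc  (n.choose j) * ((n - j).choose m) * (j.factorial * m.factorial * (n - j - m).factorial)
        = (n.choose j) * j.factorial * ((n - j).choose m * m.factorial * (n - j - m).factorial) := by ring
      _ = n.factorial := by rw [e2]; exact e1
  have h3 : n - m - j = n - j - m := by omega
  rw [h3] at h1
  have h4 : (n.choose m) * ((n - m).choose j) = (n.choose j) * ((n - j).choose m) := by
    have hpos : 0 < m.factorial * j.factorial * (n - j - m).factorial :=
      Nat.mul_pos (Nat.mul_pos m.factorial_pos j.factorial_pos) (n - j - m).factorial_pos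
    have := h1.trans h2.symm
    rw [show j.factorial * m.factorial * (n-j-m).factorial
        = m.factorial * j.factorial * (n-j-m).factorial by ring] at this
    exact Nat.eq_of_mul_eq_mul_right hpos this
  exact_mod_cast congrArg (Nat.cast : ℕ → ℝ) h4
lemma key (n : ℕ) (a b c : ℝ) :
    ∑ m ∈ Finset.range (n + 1), (n.choose m : ℝ) * (-1) ^ m *
        risingFactorial (a + c + n - 1) m * risingFactorial (c + m) (n - m) *
        risingFactorial b m * risingFactorial (a + b + m) (n - m)
      = risingFactorial a n * risingFactorial (c - b) n := by
  set A : ℝ := a + c + n - 1 with hA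
  set F : ℕ → ℕ → ℝ := fun m j =>
    (n.choose m : ℝ) * ((n - m).choose j : ℝ) * (-1) ^ m * risingFactorial A m *
      risingFactorial (c - b) j * risingFactorial b m *
      risingFactorial (b + m) (n - m - j) * risingFactorial (a + b + m) (n - m) with hF
  have step1 : ∑ m ∈ Finset.range (n + 1), (n.choose m : ℝ) * (-1) ^ m *
        risingFactorial A m * risingFactorial (c + m) (n - m) *
        risingFactorial b m * risingFactorial (a + b + m) (n - m)
      = ∑ m ∈ Finset.range (n + 1), ∑ j ∈ Finset.range (n - m + 1), F m j := by
    refine Finset.sum_congr rfl fun m _ => ?_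
    have hv : risingFactorial (c + m) (n - m)
        = ∑ j ∈ Finset.range ((n - m) + 1), ((n - m).choose j : ℝ) *
            risingFactorial (c - b) j * risingFactorial (b + m) (n - m - j) := by
      rw [show c + (m : ℝ) = (c - b) + (b + m) by ring, ← vand (n - m) (c - b) (b + m)]
    rw [hv, Finset.mul_sum, Finset.sum_mul, Finset.sum_mul]
    refine Finset.sum_congr rfl fun j _ => ?_
    rw [hF]; ring
  rw [step1, triangle_swap]
  have step3 : ∀ j ∈ Finset.range (n + 1),
      ∑ m ∈ Finset.range (n - j + 1), F m j
        = risingFactorial (c - b) n *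
            ((n.choose j : ℝ) * (-1) ^ (n - j) * risingFactorial b (n - j) *
              risingFactorial (a + b + (n - j : ℕ)) j) := by
    intro j hj
    have hjn : j ≤ n := Nat.lt_succ_iff.mp (Finset.mem_range.mp hj)
    have inner : ∑ m ∈ Finset.range (n - j + 1), F m j
        = ((n.choose j : ℝ) * risingFactorial (c - b) j *
            risingFactorial b (n - j) * risingFactorial (a + b + (n - j : ℕ)) j) *
          ∑ m ∈ Finset.range ((n - j) + 1), ((n - j).choose m : ℝ) * (-1) ^ m *
            risingFactorial A m * risingFactorial ((a + b) + m) ((n - j) - m) := by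
      rw [Finset.mul_sum]
      refine Finset.sum_congr rfl fun m hm => ?_
      have hmn : m ≤ n - j := Nat.lt_succ_iff.mp (Finset.mem_range.mp hm)
      have hmj : m + j ≤ n := by omega
      rw [hF]
      have hcs := choose_swap hmj
      have hb : risingFactorial b m * risingFactorial (b + m) (n - m - j)
          = risingFactorial b (n - j) := by
        rw [show n - m - j = (n - j) - m by omega, ← rf_add]
        congr 1; omega
      have hab : risingFactorial (a + b + m) (n - m)
          = risingFactorial (a + b + m) ((n - j) - m) *
              risingFactorial (a + b + (n - j : ℕ)) j := by
        rw [show n - m = ((n - j) - m) + j by omega, rf_add]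
        congr 2
        rw [Nat.cast_sub hmn, Nat.cast_sub hjn]
        push_cast; ring
      calc (n.choose m : ℝ) * ((n - m).choose j : ℝ) * (-1) ^ m * risingFactorial A m *
            risingFactorial (c - b) j * risingFactorial b m *
            risingFactorial (b + m) (n - m - j) * risingFactorial (a + b + m) (n - m)
          = ((n.choose m : ℝ) * ((n - m).choose j : ℝ)) * ((-1) ^ m * risingFactorial A m *
            risingFactorial (c - b) j *
            (risingFactorial b m * risingFactorial (b + m) (n - m - j)) *
            risingFactorial (a + b + m) (n - m)) := by ring
        _ = ((n.choose j : ℝ) * ((n - j).choose m : ℝ)) * ((-1) ^ m * risingFactorial A m *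
            risingFactorial (c - b) j * risingFactorial b (n - j) *
            (risingFactorial (a + b + m) ((n - j) - m) *
              risingFactorial (a + b + (n - j : ℕ)) j)) := by rw [hcs, hb, hab]
        _ = _ := by ring
    rw [inner, altvand (n - j) A (a + b)]
    have hneg : risingFactorial (a + b - A) (n - j)
        = (-1) ^ (n - j) * risingFactorial (c - b + j) (n - j) := by
      rw [show a + b - A = 1 - (c - b + (j : ℝ)) - ((n - j : ℕ) : ℝ) by
        rw [Nat.cast_sub hjn, hA]; ring]
      exact rf_neg _ _
    rw [hneg]
    have hcb : risingFactorial (c - b) j * risingFactorial (c - b + j) (n - j)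
        = risingFactorial (c - b) n := by
      rw [← rf_add]; congr 1; omega
    calc (n.choose j : ℝ) * risingFactorial (c - b) j * risingFactorial b (n - j) *
          risingFactorial (a + b + (n - j : ℕ)) j *
          ((-1) ^ (n - j) * risingFactorial (c - b + j) (n - j))
        = (risingFactorial (c - b) j * risingFactorial (c - b + j) (n - j)) *
          ((n.choose j : ℝ) * (-1) ^ (n - j) * risingFactorial b (n - j) *
            risingFactorial (a + b + (n - j : ℕ)) j) := by ring
      _ = _ := by rw [hcb]
  rw [Finset.sum_congr rfl step3, ← Finset.mul_sum]
  set G : ℕ → ℝ := fun j => (n.choose j : ℝ) * (-1) ^ (n - j) * risingFactorial b (n - j) *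
    risingFactorial (a + b + (n - j : ℕ)) j with hG
  have step4 : ∑ j ∈ Finset.range (n + 1), G j
      = ∑ j ∈ Finset.range (n + 1), (n.choose j : ℝ) * (-1) ^ j * risingFactorial b j *
          risingFactorial ((a + b) + j) (n - j) := by
    rw [← Finset.sum_range_reflect G (n + 1)]
    refine Finset.sum_congr rfl fun j hj => ?_
    have hjn : j ≤ n := Nat.lt_succ_iff.mp (Finset.mem_range.mp hj)
    rw [hG]
    simp only [Nat.add_sub_cancel]
    rw [show n - (n - j) = j by omega, Nat.choose_symm hjn]
  rw [step4, altvand n b (a + b), show a + b - b = a by ring]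
  ring
lemma realBetaIntegrable {u v : ℝ} (hu : 0 < u) (hv : 0 < v) :
    IntervalIntegrable (fun x : ℝ => x ^ (u - 1) * (1 - x) ^ (v - 1)) volume 0 1 := by
  have h := Complex.betaIntegral_convergent (u := (u : ℂ)) (v := (v : ℂ))
    (by simpa using hu) (by simpa using hv)
  rw [intervalIntegrable_iff_integrableOn_Ioc_of_le zero_le_one] at h ⊢
  have hre : IntegrableOn (fun x : ℝ =>
      ((x : ℂ) ^ ((u : ℂ) - 1) * (1 - (x : ℂ)) ^ ((v : ℂ) - 1)).re) (Set.Ioc 0 1) volume :=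
    h.re
  refine hre.congr_fun (fun x hx => ?_) measurableSet_Ioc
  have hx0 : (0 : ℝ) ≤ x := le_of_lt hx.1
  have hx1 : (0 : ℝ) ≤ 1 - x := by linarith [hx.2]
  have e1 : (x : ℂ) ^ ((u : ℂ) - 1) = ((x ^ (u - 1) : ℝ) : ℂ) := by
    rw [Complex.ofReal_cpow hx0]; norm_cast
  have e2 : (1 - (x : ℂ)) ^ ((v : ℂ) - 1) = (((1 - x) ^ (v - 1) : ℝ) : ℂ) := by
    rw [show (1 : ℂ) - (x : ℂ) = ((1 - x : ℝ) : ℂ) by push_cast; ring,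
      Complex.ofReal_cpow hx1]
    norm_cast
  beta_reduce
  rw [e1, e2, ← Complex.ofReal_mul, Complex.ofReal_re]

lemma realBeta {u v : ℝ} (hu : 0 < u) (hv : 0 < v) :
    ∫ x in (0:ℝ)..1, x ^ (u - 1) * (1 - x) ^ (v - 1)
      = Real.Gamma u * Real.Gamma v / Real.Gamma (u + v) := by
  have hG := Complex.Gamma_mul_Gamma_eq_betaIntegral (s := (u : ℂ)) (t := (v : ℂ))
    (by simpa using hu) (by simpa using hv)
  have hbeta : Complex.betaIntegral (u : ℂ) (v : ℂ)
      = ((∫ x in (0:ℝ)..1, x ^ (u - 1) * (1 - x) ^ (v - 1) : ℝ) : ℂ) := by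
    have h0 : Complex.betaIntegral (u : ℂ) (v : ℂ)
        = ∫ x in (0:ℝ)..1, (((x ^ (u - 1) * (1 - x) ^ (v - 1) : ℝ)) : ℂ) := by
      rw [Complex.betaIntegral]
      rw [intervalIntegral.integral_of_le zero_le_one,
        intervalIntegral.integral_of_le zero_le_one]
      refine setIntegral_congr_fun measurableSet_Ioc fun x hx => ?_
      have hx0 : (0 : ℝ) ≤ x := le_of_lt hx.1
      have hx1 : (0 : ℝ) ≤ 1 - x := by linarith [hx.2]
      rw [show (1 : ℂ) - (x : ℂ) = ((1 - x : ℝ) : ℂ) by push_cast; ring,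
        show ((u:ℂ) - 1) = ((u - 1 : ℝ) : ℂ) by push_cast; ring,
        show ((v:ℂ) - 1) = ((v - 1 : ℝ) : ℂ) by push_cast; ring,
        ← Complex.ofReal_cpow hx0, ← Complex.ofReal_cpow hx1]
      norm_cast
    exact h0.trans (RCLike.intervalIntegral_ofReal (𝕜 := ℂ))
  rw [hbeta, show ((u:ℂ)+(v:ℂ)) = ((u+v:ℝ):ℂ) by push_cast; ring, Complex.Gamma_ofReal,
    Complex.Gamma_ofReal, Complex.Gamma_ofReal] at hG
  have hGpos : (0 : ℝ) < Real.Gamma (u + v) := Real.Gamma_pos_of_pos (by linarith)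
  have h2 : Real.Gamma u * Real.Gamma v
      = Real.Gamma (u + v) * ∫ x in (0:ℝ)..1, x ^ (u - 1) * (1 - x) ^ (v - 1) := by
    exact_mod_cast hG
  rw [eq_div_iff (ne_of_gt hGpos)]
  linarith [h2]
lemma Gamma_rf (x : ℝ) (hx : 0 < x) (k : ℕ) :
    Real.Gamma (x + k) = risingFactorial x k * Real.Gamma x := by
  induction k with
  | zero => simp [rf_zero]
  | succ k ih =>
    have hxk : x + (k : ℝ) ≠ 0 := by positivity
    rw [show x + ((k + 1 : ℕ) : ℝ) = (x + k) + 1 by push_cast; ring,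
      Real.Gamma_add_one hxk, ih, rf_succ]
    ring

lemma momentIntegrable {a b : ℝ} (ha : 0 < a) (hb : 0 < b) (m : ℕ) :
    IntervalIntegrable (fun x : ℝ => (x - 1) ^ m * (x ^ (a - 1) * (1 - x) ^ (b - 1)))
      volume 0 1 :=
  (realBetaIntegrable ha hb).continuousOn_mul
    ((continuous_pow m).comp (continuous_id.sub continuous_const)).continuousOn

lemma moment {a b : ℝ} (ha : 0 < a) (hb : 0 < b) (m : ℕ) :
    ∫ x in (0:ℝ)..1, (x - 1) ^ m * (x ^ (a - 1) * (1 - x) ^ (b - 1))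
      = (-1) ^ m * (Real.Gamma a * Real.Gamma (b + m) / Real.Gamma (a + b + m)) := by
  have hbm : (0:ℝ) < b + m := by positivity
  have h1 : ∫ x in (0:ℝ)..1, (x - 1) ^ m * (x ^ (a - 1) * (1 - x) ^ (b - 1))
      = ∫ x in (0:ℝ)..1, (-1) ^ m * (x ^ (a - 1) * (1 - x) ^ ((b + m) - 1)) := by
    rw [intervalIntegral.integral_of_le zero_le_one,
      intervalIntegral.integral_of_le zero_le_one,
      MeasureTheory.integral_Ioc_eq_integral_Ioo,
      MeasureTheory.integral_Ioc_eq_integral_Ioo]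
    refine setIntegral_congr_fun measurableSet_Ioo fun x hx => ?_
    have h1x : (0:ℝ) < 1 - x := by linarith [hx.2]
    have e1 : (x - 1) ^ m = (-1) ^ m * ((1 - x) ^ (m : ℝ)) := by
      rw [Real.rpow_natCast, show x - 1 = (-1) * (1 - x) by ring, mul_pow]
    have e2 : (1 - x) ^ ((b + m) - 1) = (1 - x) ^ (m : ℝ) * (1 - x) ^ (b - 1) := by
      rw [← Real.rpow_add h1x]
      congr 1; ring
    rw [e1, e2]; ring
  rw [h1, intervalIntegral.integral_const_mul, realBeta ha hbm,
    show a + (b + (m:ℝ)) = a + b + m by ring]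
theorem stmt_5 (a b c : ℝ) (ha : 0 < a) (hb : 0 < b) (hc : 0 < c) (n : ℕ) :
    ∫ x in (0:ℝ)..1, jacobiK n a c x * betaDensity a b x
      = risingFactorial a n * risingFactorial (c - b) n /
          ((n.factorial : ℝ) * risingFactorial (a + b) n) := by
  have hGa : (0:ℝ) < Real.Gamma a := Real.Gamma_pos_of_pos ha
  have hGb : (0:ℝ) < Real.Gamma b := Real.Gamma_pos_of_pos hb
  have hGab : (0:ℝ) < Real.Gamma (a + b) := Real.Gamma_pos_of_pos (by linarith)
  set B : ℝ := Real.Gamma a * Real.Gamma b / Real.Gamma (a + b) with hB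
  have hBpos : 0 < B := by positivity
  set coef : ℕ → ℝ := fun m => (n.choose m : ℝ) * risingFactorial (a + c + n - 1) m *
    risingFactorial (c + m) (n - m) with hcoef
  have step1 : ∫ x in (0:ℝ)..1, jacobiK n a c x * betaDensity a b x
      = ∑ m ∈ Finset.range (n + 1), (coef m / ((n.factorial : ℝ) * B)) *
          ∫ x in (0:ℝ)..1, (x - 1) ^ m * (x ^ (a - 1) * (1 - x) ^ (b - 1)) := by
    have hcongr : ∫ x in (0:ℝ)..1, jacobiK n a c x * betaDensity a b x
        = ∫ x in (0:ℝ)..1, ∑ m ∈ Finset.range (n + 1),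
            (coef m / ((n.factorial : ℝ) * B)) *
              ((x - 1) ^ m * (x ^ (a - 1) * (1 - x) ^ (b - 1))) := by
      refine intervalIntegral.integral_congr fun x hx => ?_
      rw [Set.uIcc_of_le zero_le_one] at hx
      rw [jacobiK, betaDensity, if_pos ⟨hx.1, hx.2⟩, ← hB]
      rw [mul_comm (1 / (n.factorial : ℝ)), mul_assoc, Finset.sum_mul]
      refine Finset.sum_congr rfl fun m _ => ?_
      rw [hcoef]
      ring
    rw [hcongr, intervalIntegral.integral_finset_sum (fun m _ =>
      (momentIntegrable ha hb m).const_mul _)]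
    exact Finset.sum_congr rfl fun m _ => intervalIntegral.integral_const_mul _ _
  rw [step1]
  have habn : 0 < risingFactorial (a + b) n := rf_pos (by linarith) n
  have step2 : ∀ m ∈ Finset.range (n + 1),
      (coef m / ((n.factorial : ℝ) * B)) *
          ∫ x in (0:ℝ)..1, (x - 1) ^ m * (x ^ (a - 1) * (1 - x) ^ (b - 1))
        = ((n.choose m : ℝ) * (-1) ^ m *
            risingFactorial (a + c + n - 1) m * risingFactorial (c + m) (n - m) *
            risingFactorial b m * risingFactorial (a + b + m) (n - m)) /
            ((n.factorial : ℝ) * risingFactorial (a + b) n) := by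
    intro m hm
    have hmn : m ≤ n := Nat.lt_succ_iff.mp (Finset.mem_range.mp hm)
    rw [moment ha hb m, Gamma_rf b hb m, Gamma_rf (a + b) (by linarith) m]
    have hsplit : risingFactorial (a + b) n
        = risingFactorial (a + b) m * risingFactorial (a + b + m) (n - m) := by
      rw [← rf_add]; congr 1; omega
    have habm : 0 < risingFactorial (a + b) m := rf_pos (by linarith) m
    have habm2 : 0 < risingFactorial (a + b + m) (n - m) := by
      rw [hsplit] at habn; nlinarith [habm, habn]
    rw [hcoef, hsplit]
    have hfac : (0:ℝ) < (n.factorial : ℝ) := by positivity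
    field_simp [hGa.ne', hGb.ne', hGab.ne', habm.ne', habm2.ne', hfac.ne']
    ring_nf
    rw [hB, mul_assoc _ (_ / _), div_mul_cancel₀ _ (ne_of_gt hGab)]; ring
  rw [Finset.sum_congr rfl step2, ← Finset.sum_div, key n a b c]
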